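/- arXiv:2101.00735 — 3 statements merged into one kernel-verified Lean document; each statement's English description precedes it below -/
import Mathlib

section
/- Block Trivial Lemma: Let n, s be positive integers and let M be an n×n complex matrix; set E = Mᴴ * M. Let S ⊆ Fin n with |S| = s, and let ψ_0, …, ψ_{s−1} be pairwise orthogonal nonzero vectors in ℂⁿ each supported on S. Assume ⟨ψ_i, E ψ_j⟩ = 0 for all i ≠ j in {0,…,s−1}. If there exists an index u ∈ S such that E(u, v) = 0 for every v ∈ S with v ≠ u, and such that ψ_j(u) ≠ 0 for every j ∈ {0,…,s−1}, then the S×S block of E is proportional to the identity: there exists c ∈ ℂ with E(k,ℓ) = c whenever k = ℓ ∈ S and E(k,ℓ) = 0 whenever k, ℓ ∈ S with k ≠ ℓ. -/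
/-!
Restricted to the coordinates in `S`, the `ψ j` are `s = |S|` pairwise orthogonal nonzero vectors,
hence an orthogonal basis of `ℂ^S`. For the `S × S` block `B` of `E`, the vector `B ψ_j` is
orthogonal to every `ψ_i` with `i ≠ j`, so it is a multiple `μ_j ψ_j`. Since row `u` of `B` is
`E u u` times the `u`-th unit vector, comparing `u`-th coordinates gives
`μ_j ψ_j(u) = E u u · ψ_j(u)`, and `ψ_j(u) ≠ 0` forces `μ_j = E u u` for every `j`.
Thus `B` agrees with `E u u • 1` on a basis.
-/

open Matrix

open scoped InnerProductSpace ComplexConjugate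

theorem Module.Basis.exists_eq_smul_of_inner_eq_zero {𝕜 V ι : Type*} [RCLike 𝕜]
    [NormedAddCommGroup V] [InnerProductSpace 𝕜 V] (b : Module.Basis ι 𝕜 V)
    (horth : Pairwise fun i j => ⟪b i, b j⟫_𝕜 = 0) {j : ι} {w : V}
    (hw : ∀ i, i ≠ j → ⟪b i, w⟫_𝕜 = 0) : ∃ μ : 𝕜, w = μ • b j := by
  refine ⟨⟪b j, w⟫_𝕜 / ⟪b j, b j⟫_𝕜,
    sub_eq_zero.mp <| InnerProductSpace.ext_inner_left_basis b fun i => ?_⟩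
  rw [inner_zero_right, inner_sub_right, inner_smul_right]
  rcases eq_or_ne i j with rfl | hij
  · rw [div_mul_cancel_of_imp fun h => by rw [inner_self_eq_zero.mp h, inner_zero_left], sub_self]
  · rw [hw i hij, horth hij, mul_zero, sub_zero]

theorem Matrix.eq_smul_one_of_inner_eq_zero {𝕜 ι κ : Type*} [RCLike 𝕜] [Fintype ι]
    [DecidableEq ι] [Fintype κ] (B : Matrix ι ι 𝕜) (φ : κ → EuclideanSpace 𝕜 ι)
    (hcard : Fintype.card κ = Fintype.card ι)
    (horth : Pairwise fun i j => ⟪φ i, φ j⟫_𝕜 = 0)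
    (hB : Pairwise fun i j => ⟪φ i, toLpLin 2 2 B (φ j)⟫_𝕜 = 0)
    (u : ι) (hrow : ∀ v, v ≠ u → B u v = 0) (hφu : ∀ j, φ j u ≠ 0) :
    B = B u u • 1 := by
  have hφ0 : ∀ j, φ j ≠ 0 := fun j h => hφu j (by simp [h])
  let b : Module.Basis κ 𝕜 (EuclideanSpace 𝕜 ι) :=
    basisOfLinearIndependentOfCardEqFinrank' φ
      (linearIndependent_of_ne_zero_of_inner_eq_zero hφ0 horth) (by simp [hcard])
  have hb : ⇑b = φ := coe_basisOfLinearIndependentOfCardEqFinrank' ..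
  have hrow_mulVec : ∀ x : ι → 𝕜, (B *ᵥ x) u = B u u * x u := fun x =>
    Fintype.sum_eq_single u fun v hv => by simp [hrow v hv]
  have heig : ∀ j, toLpLin 2 2 B (φ j) = B u u • φ j := by
    intro j
    obtain ⟨μ, hμ⟩ := b.exists_eq_smul_of_inner_eq_zero (hb ▸ horth) (j := j)
      (w := toLpLin 2 2 B (φ j)) fun i hij => by simpa [hb] using hB hij
    have hμu : μ * φ j u = B u u * φ j u := by
      rw [← hrow_mulVec]
      simpa [hb] using (congrArg (· u) hμ).symm
    rw [hμ, hb, mul_right_cancel₀ (hφu j) hμu]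
  apply (toLpLin 2 2).injective
  refine b.ext fun j => ?_
  simp [hb, heig]

theorem Finset.sum_coe_sort_eq_sum_univ {m M : Type*} [Fintype m] [AddCommMonoid M]
    (S : Finset m) {g : m → M} (hg : ∀ k, k ∉ S → g k = 0) :
    ∑ k : S, g k = ∑ k, g k := by
  rw [sum_coe_sort]
  exact sum_subset (subset_univ S) fun k _ hk => hg k hk

section Restriction

variable {m 𝕜 : Type*} [Fintype m] [RCLike 𝕜] (S : Finset m) {x : m → 𝕜}

theorem Matrix.submatrix_mulVec_restrict (A : Matrix m m 𝕜) (hx : ∀ k, k ∉ S → x k = 0) :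
    A.submatrix Subtype.val Subtype.val *ᵥ (fun k : S => x k) = fun k : S => (A *ᵥ x) k := by
  ext k
  exact S.sum_coe_sort_eq_sum_univ (g := fun l => A k l * x l) fun l hl => by simp [hx l hl]

theorem EuclideanSpace.inner_restrict (hx : ∀ k, k ∉ S → x k = 0) (y : m → 𝕜) :
    ⟪WithLp.toLp 2 fun k : S => x k, WithLp.toLp 2 fun k : S => y k⟫_𝕜 =
      ∑ k, conj (x k) * y k := by
  rw [EuclideanSpace.inner_toLp_toLp, dotProduct]
  simp only [Pi.star_apply, RCLike.star_def, mul_comm (y _)]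
  exact S.sum_coe_sort_eq_sum_univ (g := fun k => conj (x k) * y k) fun k hk => by simp [hx k hk]

end Restriction

theorem block_trivial_lemma_general
    (n s : ℕ)
    (M : Matrix (Fin n) (Fin n) ℂ)
    (S : Finset (Fin n)) (hScard : S.card = s)
    (ψ : Fin s → Fin n → ℂ)
    (hψsupp : ∀ i, ∀ k, k ∉ S → ψ i k = 0)
    (hψorth : ∀ i j, i ≠ j → ∑ k, (starRingEnd ℂ) (ψ i k) * ψ j k = 0)
    (hzero : ∀ i j, i ≠ j →
      ∑ k, (starRingEnd ℂ) (ψ i k) * ((Mᴴ * M).mulVec (ψ j)) k = 0)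
    (u : Fin n) (hu : u ∈ S)
    (hrow : ∀ v ∈ S, v ≠ u → (Mᴴ * M) u v = 0)
    (hψu : ∀ j, ψ j u ≠ 0) :
    ∃ c : ℂ, (∀ k ∈ S, ∀ l ∈ S, (Mᴴ * M) k l = if k = l then c else 0) := by
  set E := Mᴴ * M
  let φ : Fin s → EuclideanSpace ℂ S := fun j => WithLp.toLp 2 fun k : S => ψ j k
  have hφorth : Pairwise fun i j => ⟪φ i, φ j⟫_ℂ = 0 := fun i j hij =>
    (EuclideanSpace.inner_restrict S (hψsupp i) _).trans (hψorth i j hij)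
  have hφE : Pairwise fun i j =>
      ⟪φ i, toLpLin 2 2 (E.submatrix Subtype.val Subtype.val) (φ j)⟫_ℂ = 0 := fun i j hij => by
    beta_reduce
    rw [toLpLin_apply, WithLp.ofLp_toLp, E.submatrix_mulVec_restrict S (hψsupp j)]
    exact (EuclideanSpace.inner_restrict S (hψsupp i) _).trans (hzero i j hij)
  have hblock : E.submatrix Subtype.val Subtype.val = E u u • 1 :=
    (E.submatrix Subtype.val Subtype.val).eq_smul_one_of_inner_eq_zero φ (by simp [hScard])
      hφorth hφE ⟨u, hu⟩ (fun (v : S) hv => hrow v v.2 (Subtype.coe_ne_coe.mpr hv)) hψu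
  refine ⟨E u u, fun k hk l hl => ?_⟩
  simpa [Subtype.ext_iff, one_apply] using congrFun₂ hblock ⟨k, hk⟩ ⟨l, hl⟩

/-- **Block Trivial Lemma.** Let `E = Mᴴ * M`, let `ψ_0, …, ψ_{s-1}` be pairwise
orthogonal nonzero vectors supported on a set `S` of cardinality `s`, with
`⟨ψ_i, E ψ_j⟩ = 0` for `i ≠ j`.  If some `u ∈ S` satisfies `E u v = 0` for every
other `v ∈ S` and `ψ_j u ≠ 0` for every `j`, then the `S × S` block of `E` is a
scalar multiple of the identity. -/
theorem block_trivial_lemma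
    (n s : ℕ) (hn : 0 < n) (hs : 0 < s)
    (M : Matrix (Fin n) (Fin n) ℂ)
    (S : Finset (Fin n)) (hSne : S.Nonempty) (hScard : S.card = s)
    (ψ : Fin s → Fin n → ℂ)
    (hψ0 : ∀ i, ψ i ≠ 0)
    (hψsupp : ∀ i, ∀ k, k ∉ S → ψ i k = 0)
    (hψorth : ∀ i j, i ≠ j → ∑ k, (starRingEnd ℂ) (ψ i k) * ψ j k = 0)
    (hzero : ∀ i j, i ≠ j →
      ∑ k, (starRingEnd ℂ) (ψ i k) * ((Mᴴ * M).mulVec (ψ j)) k = 0)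
    (u : Fin n) (hu : u ∈ S)
    (hrow : ∀ v ∈ S, v ≠ u → (Mᴴ * M) u v = 0)
    (hψu : ∀ j, ψ j u ≠ 0) :
    ∃ c : ℂ, (∀ k ∈ S, ∀ l ∈ S, (Mᴴ * M) k l = if k = l then c else 0) :=
  block_trivial_lemma_general n s M S hScard ψ hψsupp hψorth hzero u hu hrow hψu
end

section
/- The 19 vectors of the set U₃ in ℂ³ ⊗ ℂ³ ⊗ ℂ³ (realized as ℂ^(Fin 3 × Fin 3 × Fin 3)) are pairwise orthogonal and each is nonzero; consequently U₃ consists of exactly 19 distinct mutually orthogonal product states. -/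
noncomputable section

/-- standard basis vectors of ℂ³ -/
def e3 (a : Fin 3) : Fin 3 → ℂ := fun k => if k = a then 1 else 0

/-- η_i = e₀ + (−1)^i e₁ -/
def eta3 (i : Fin 2) : Fin 3 → ℂ := fun k => e3 0 k + (-1 : ℂ) ^ (i : ℕ) * e3 1 k

/-- ξ_j = e₁ + (−1)^j e₂ -/
def xi3 (j : Fin 2) : Fin 3 → ℂ := fun k => e3 1 k + (-1 : ℂ) ^ (j : ℕ) * e3 2 k

/-- the product vector u ⊗ v ⊗ w -/
def tp3 (u v w : Fin 3 → ℂ) : Fin 3 × Fin 3 × Fin 3 → ℂ :=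
  fun p => u p.1 * v p.2.1 * w p.2.2

/-- the stopper state S -/
def stop3 : Fin 3 × Fin 3 × Fin 3 → ℂ :=
  tp3 (fun k => e3 0 k + e3 1 k + e3 2 k) (fun k => e3 0 k + e3 1 k + e3 2 k)
    (fun k => e3 0 k + e3 1 k + e3 2 k)

/-- the 19-member set U₃ -/
def U3 : Set (Fin 3 × Fin 3 × Fin 3 → ℂ) :=
  {x | ∃ i j : Fin 2, (i, j) ≠ (0, 0) ∧
      (x = tp3 (xi3 j) (e3 0) (eta3 i) ∨ x = tp3 (xi3 j) (eta3 i) (e3 2) ∨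
       x = tp3 (e3 2) (xi3 j) (eta3 i) ∨ x = tp3 (eta3 i) (e3 2) (xi3 j) ∨
       x = tp3 (eta3 i) (xi3 j) (e3 0) ∨ x = tp3 (e3 0) (eta3 i) (xi3 j))} ∪ {stop3}

/-- the standard Hermitian inner product on ℂ^(Fin 3 × Fin 3 × Fin 3) -/
def inp3 (x y : Fin 3 × Fin 3 × Fin 3 → ℂ) : ℂ :=
  ∑ p, (starRingEnd ℂ) (x p) * y p

-- integer model
def e3z (a : Fin 3) : Fin 3 → ℤ := fun k => if k = a then 1 else 0
def eta3z (i : Fin 2) : Fin 3 → ℤ := fun k => e3z 0 k + (-1 : ℤ) ^ (i : ℕ) * e3z 1 k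
def xi3z (j : Fin 2) : Fin 3 → ℤ := fun k => e3z 1 k + (-1 : ℤ) ^ (j : ℕ) * e3z 2 k
def tp3z (u v w : Fin 3 → ℤ) : Fin 3 × Fin 3 × Fin 3 → ℤ :=
  fun p => u p.1 * v p.2.1 * w p.2.2
def stop3z : Fin 3 × Fin 3 × Fin 3 → ℤ :=
  tp3z (fun k => e3z 0 k + e3z 1 k + e3z 2 k) (fun k => e3z 0 k + e3z 1 k + e3z 2 k)
    (fun k => e3z 0 k + e3z 1 k + e3z 2 k)

def cvec {α : Type} (z : α → ℤ) : α → ℂ := fun p => (z p : ℂ)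

lemma ce3 (a : Fin 3) : cvec (e3z a) = e3 a := by
  funext k; simp [cvec, e3, e3z]

lemma ceta3 (i : Fin 2) : cvec (eta3z i) = eta3 i := by
  funext k; simp [cvec, eta3, eta3z, ← ce3]

lemma cxi3 (j : Fin 2) : cvec (xi3z j) = xi3 j := by
  funext k; simp [cvec, xi3, xi3z, ← ce3]

lemma ctp3 (u v w : Fin 3 → ℤ) : cvec (tp3z u v w) = tp3 (cvec u) (cvec v) (cvec w) := by
  funext p; simp [cvec, tp3, tp3z]

def Vz : Fin 19 → (Fin 3 × Fin 3 × Fin 3 → ℤ) :=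
  ![tp3z (xi3z 1) (e3z 0) (eta3z 0), tp3z (xi3z 0) (e3z 0) (eta3z 1), tp3z (xi3z 1) (e3z 0) (eta3z 1),
    tp3z (xi3z 1) (eta3z 0) (e3z 2), tp3z (xi3z 0) (eta3z 1) (e3z 2), tp3z (xi3z 1) (eta3z 1) (e3z 2),
    tp3z (e3z 2) (xi3z 1) (eta3z 0), tp3z (e3z 2) (xi3z 0) (eta3z 1), tp3z (e3z 2) (xi3z 1) (eta3z 1),
    tp3z (eta3z 0) (e3z 2) (xi3z 1), tp3z (eta3z 1) (e3z 2) (xi3z 0), tp3z (eta3z 1) (e3z 2) (xi3z 1),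
    tp3z (eta3z 0) (xi3z 1) (e3z 0), tp3z (eta3z 1) (xi3z 0) (e3z 0), tp3z (eta3z 1) (xi3z 1) (e3z 0),
    tp3z (e3z 0) (eta3z 0) (xi3z 1), tp3z (e3z 0) (eta3z 1) (xi3z 0), tp3z (e3z 0) (eta3z 1) (xi3z 1),
    stop3z]

set_option maxHeartbeats 4000000 in
lemma hVz_ne : ∀ n : Fin 19, Vz n ≠ 0 := by decide

set_option maxHeartbeats 4000000 in
lemma hVz_inj : Function.Injective Vz := by decide

set_option maxHeartbeats 4000000 in
lemma hVz_orth : ∀ m n : Fin 19, m ≠ n → (∑ p, Vz m p * Vz n p) = 0 := by decide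

def Vc : Fin 19 → (Fin 3 × Fin 3 × Fin 3 → ℂ) := fun n => cvec (Vz n)

lemma hVc (n : Fin 19) : Vc n = cvec (Vz n) := rfl

lemma cstop : cvec stop3z = stop3 := by
  funext p; simp [cvec, stop3, stop3z, tp3, tp3z, e3, e3z]

lemma cvec_inj {α : Type} : Function.Injective (cvec (α := α)) := by
  intro a b h
  funext p
  have := congrFun h p
  simpa [cvec] using this

lemma hVc_vals :
    Vc 0 = tp3 (xi3 1) (e3 0) (eta3 0) ∧ Vc 1 = tp3 (xi3 0) (e3 0) (eta3 1) ∧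
    Vc 2 = tp3 (xi3 1) (e3 0) (eta3 1) ∧ Vc 3 = tp3 (xi3 1) (eta3 0) (e3 2) ∧
    Vc 4 = tp3 (xi3 0) (eta3 1) (e3 2) ∧ Vc 5 = tp3 (xi3 1) (eta3 1) (e3 2) ∧
    Vc 6 = tp3 (e3 2) (xi3 1) (eta3 0) ∧ Vc 7 = tp3 (e3 2) (xi3 0) (eta3 1) ∧
    Vc 8 = tp3 (e3 2) (xi3 1) (eta3 1) ∧ Vc 9 = tp3 (eta3 0) (e3 2) (xi3 1) ∧
    Vc 10 = tp3 (eta3 1) (e3 2) (xi3 0) ∧ Vc 11 = tp3 (eta3 1) (e3 2) (xi3 1) ∧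
    Vc 12 = tp3 (eta3 0) (xi3 1) (e3 0) ∧ Vc 13 = tp3 (eta3 1) (xi3 0) (e3 0) ∧
    Vc 14 = tp3 (eta3 1) (xi3 1) (e3 0) ∧ Vc 15 = tp3 (e3 0) (eta3 0) (xi3 1) ∧
    Vc 16 = tp3 (e3 0) (eta3 1) (xi3 0) ∧ Vc 17 = tp3 (e3 0) (eta3 1) (xi3 1) ∧
    Vc 18 = stop3 := by
  refine ⟨?_,?_,?_,?_,?_,?_,?_,?_,?_,?_,?_,?_,?_,?_,?_,?_,?_,?_,?_⟩ <;>
    first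
      | exact cstop
      | exact (ctp3 _ _ _).trans (by simp only [ce3, ceta3, cxi3])

lemma U3_eq_range : U3 = Set.range Vc := by
  obtain ⟨h0,h1,h2,h3,h4,h5,h6,h7,h8,h9,h10,h11,h12,h13,h14,h15,h16,h17,h18⟩ := hVc_vals
  apply Set.eq_of_subset_of_subset
  · rintro x (⟨i, j, hij, h | h | h | h | h | h⟩ | h)
    all_goals try subst h
    · fin_cases i <;> fin_cases j
      · exact absurd rfl hij
      · exact ⟨0, h0⟩
      · exact ⟨1, h1⟩
      · exact ⟨2, h2⟩
    · fin_cases i <;> fin_cases j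
      · exact absurd rfl hij
      · exact ⟨3, h3⟩
      · exact ⟨4, h4⟩
      · exact ⟨5, h5⟩
    · fin_cases i <;> fin_cases j
      · exact absurd rfl hij
      · exact ⟨6, h6⟩
      · exact ⟨7, h7⟩
      · exact ⟨8, h8⟩
    · fin_cases i <;> fin_cases j
      · exact absurd rfl hij
      · exact ⟨9, h9⟩
      · exact ⟨10, h10⟩
      · exact ⟨11, h11⟩
    · fin_cases i <;> fin_cases j
      · exact absurd rfl hij
      · exact ⟨12, h12⟩
      · exact ⟨13, h13⟩
      · exact ⟨14, h14⟩
    · fin_cases i <;> fin_cases j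
      · exact absurd rfl hij
      · exact ⟨15, h15⟩
      · exact ⟨16, h16⟩
      · exact ⟨17, h17⟩
    · first
        | exact ⟨18, h18⟩
        | (rw [Set.mem_singleton_iff] at h; subst h; exact ⟨18, h18⟩)
  · rintro x ⟨n, rfl⟩
    fin_cases n
    · exact Or.inl ⟨0, 1, by decide, Or.inl h0⟩
    · exact Or.inl ⟨1, 0, by decide, Or.inl h1⟩
    · exact Or.inl ⟨1, 1, by decide, Or.inl h2⟩
    · exact Or.inl ⟨0, 1, by decide, Or.inr (Or.inl h3)⟩
    · exact Or.inl ⟨1, 0, by decide, Or.inr (Or.inl h4)⟩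
    · exact Or.inl ⟨1, 1, by decide, Or.inr (Or.inl h5)⟩
    · exact Or.inl ⟨0, 1, by decide, Or.inr (Or.inr (Or.inl h6))⟩
    · exact Or.inl ⟨1, 0, by decide, Or.inr (Or.inr (Or.inl h7))⟩
    · exact Or.inl ⟨1, 1, by decide, Or.inr (Or.inr (Or.inl h8))⟩
    · exact Or.inl ⟨0, 1, by decide, Or.inr (Or.inr (Or.inr (Or.inl h9)))⟩
    · exact Or.inl ⟨1, 0, by decide, Or.inr (Or.inr (Or.inr (Or.inl h10)))⟩
    · exact Or.inl ⟨1, 1, by decide, Or.inr (Or.inr (Or.inr (Or.inl h11)))⟩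
    · exact Or.inl ⟨0, 1, by decide, Or.inr (Or.inr (Or.inr (Or.inr (Or.inl h12))))⟩
    · exact Or.inl ⟨1, 0, by decide, Or.inr (Or.inr (Or.inr (Or.inr (Or.inl h13))))⟩
    · exact Or.inl ⟨1, 1, by decide, Or.inr (Or.inr (Or.inr (Or.inr (Or.inl h14))))⟩
    · exact Or.inl ⟨0, 1, by decide, Or.inr (Or.inr (Or.inr (Or.inr (Or.inr h15))))⟩
    · exact Or.inl ⟨1, 0, by decide, Or.inr (Or.inr (Or.inr (Or.inr (Or.inr h16))))⟩
    · exact Or.inl ⟨1, 1, by decide, Or.inr (Or.inr (Or.inr (Or.inr (Or.inr h17))))⟩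
    · exact Or.inr h18

lemma inp3_cast (a b : Fin 3 × Fin 3 × Fin 3 → ℤ) :
    inp3 (cvec a) (cvec b) = ((∑ p, a p * b p : ℤ) : ℂ) := by
  simp [inp3, cvec]

/-- The 19 vectors of U₃ are nonzero, pairwise orthogonal, and U₃ has exactly 19
elements. -/
theorem U3_pairwise_orthogonal_nonzero :
    (∀ x ∈ U3, x ≠ 0) ∧
    (∀ x ∈ U3, ∀ y ∈ U3, x ≠ y → inp3 x y = 0) ∧
    U3.ncard = 19 := by
  have hVc_inj : Function.Injective Vc := fun m n h => hVz_inj (cvec_inj h)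
  refine ⟨?_, ?_, ?_⟩
  · rintro x hx hx0
    rw [U3_eq_range] at hx
    obtain ⟨n, rfl⟩ := hx
    apply hVz_ne n
    apply cvec_inj
    rw [← hVc n, hx0]
    funext p; simp [cvec]
  · intro x hx y hy hxy
    rw [U3_eq_range] at hx hy
    obtain ⟨m, rfl⟩ := hx
    obtain ⟨n, rfl⟩ := hy
    have hmn : m ≠ n := fun h => hxy (congrArg Vc h)
    rw [hVc m, hVc n, inp3_cast, hVz_orth m n hmn]
    simp
  · rw [U3_eq_range, ← Set.image_univ, Set.ncard_image_of_injective _ hVc_inj,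
      Set.ncard_univ]
    simp
end
end

section
/- The set U₃ of 19 orthogonal product states in ℂ^(Fin 3 × Fin 3 × Fin 3) is an unextendible product basis: if u, v, w ∈ ℂ³ are such that the product vector u ⊗ v ⊗ w is orthogonal to every member of U₃, then u ⊗ v ⊗ w = 0 (equivalently, u = 0 or v = 0 or w = 0). -/
noncomputable section

/- ### Auxiliary computation lemmas -/

lemma inp3_tp3 (a b c u v w : Fin 3 → ℂ) :
    inp3 (tp3 a b c) (tp3 u v w) =
      (∑ k, (starRingEnd ℂ) (a k) * u k) * (∑ k, (starRingEnd ℂ) (b k) * v k) *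
        (∑ k, (starRingEnd ℂ) (c k) * w k) := by
  simp only [inp3, tp3, map_mul, Fintype.sum_prod_type, Fin.sum_univ_three]
  ring

lemma dot_e0 (u : Fin 3 → ℂ) : (∑ k, (starRingEnd ℂ) (e3 0 k) * u k) = u 0 := by
  simp [e3, Fin.sum_univ_three]
lemma dot_e2 (u : Fin 3 → ℂ) : (∑ k, (starRingEnd ℂ) (e3 2 k) * u k) = u 2 := by
  simp [e3, Fin.sum_univ_three]
lemma dot_eta0 (u : Fin 3 → ℂ) : (∑ k, (starRingEnd ℂ) (eta3 0 k) * u k) = u 0 + u 1 := by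
  simp [eta3, e3, Fin.sum_univ_three]
lemma dot_eta1 (u : Fin 3 → ℂ) : (∑ k, (starRingEnd ℂ) (eta3 1 k) * u k) = u 0 - u 1 := by
  simp [eta3, e3, Fin.sum_univ_three]; ring
lemma dot_xi0 (u : Fin 3 → ℂ) : (∑ k, (starRingEnd ℂ) (xi3 0 k) * u k) = u 1 + u 2 := by
  simp [xi3, e3, Fin.sum_univ_three]
lemma dot_xi1 (u : Fin 3 → ℂ) : (∑ k, (starRingEnd ℂ) (xi3 1 k) * u k) = u 1 - u 2 := by
  simp [xi3, e3, Fin.sum_univ_three]; ring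
lemma dot_s (u : Fin 3 → ℂ) :
    (∑ k, (starRingEnd ℂ) (e3 0 k + e3 1 k + e3 2 k) * u k) = u 0 + u 1 + u 2 := by
  simp [e3, Fin.sum_univ_three]

/- ### Zero-divisor helper lemmas -/

lemma z3m {a b c : ℂ} (ha : a ≠ 0) (hc : c ≠ 0) (h : a * b * c = 0) : b = 0 := by
  rcases mul_eq_zero.mp h with h1 | h1
  · rcases mul_eq_zero.mp h1 with h2 | h2
    · exact absurd h2 ha
    · exact h2
  · exact absurd h1 hc

lemma z3r {a b c : ℂ} (ha : a ≠ 0) (hb : b ≠ 0) (h : a * b * c = 0) : c = 0 := by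
  rcases mul_eq_zero.mp h with h1 | h1
  · rcases mul_eq_zero.mp h1 with h2 | h2
    · exact absurd h2 ha
    · exact absurd h2 hb
  · exact h1

lemma z3l {a b c : ℂ} (hb : b ≠ 0) (hc : c ≠ 0) (h : a * b * c = 0) : a = 0 := by
  rcases mul_eq_zero.mp h with h1 | h1
  · rcases mul_eq_zero.mp h1 with h2 | h2
    · exact h2
    · exact absurd h2 hb
  · exact absurd h1 hc

/- ### The main scalar case analysis, assuming the stopper hits the first party -/

lemma upb_main (x0 x1 x2 y0 y1 y2 z0 z1 z2 : ℂ)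
    (hs : x0 + x1 + x2 = 0)
    (hA1a : (x1 - x2) * y0 * (z0 + z1) = 0)
    (hA1b : (x1 + x2) * y0 * (z0 - z1) = 0)
    (hA1c : (x1 - x2) * y0 * (z0 - z1) = 0)
    (hA2a : (x1 - x2) * (y0 + y1) * z2 = 0)
    (hA2b : (x1 + x2) * (y0 - y1) * z2 = 0)
    (hA2c : (x1 - x2) * (y0 - y1) * z2 = 0)
    (hA3a : x2 * (y1 - y2) * (z0 + z1) = 0)
    (hA3b : x2 * (y1 + y2) * (z0 - z1) = 0)
    (hA3c : x2 * (y1 - y2) * (z0 - z1) = 0)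
    (hB1a : (x0 + x1) * y2 * (z1 - z2) = 0)
    (hB1b : (x0 - x1) * y2 * (z1 + z2) = 0)
    (hB1c : (x0 - x1) * y2 * (z1 - z2) = 0)
    (hB2a : (x0 + x1) * (y1 - y2) * z0 = 0)
    (hB2b : (x0 - x1) * (y1 + y2) * z0 = 0)
    (hB2c : (x0 - x1) * (y1 - y2) * z0 = 0)
    (hB3a : x0 * (y0 + y1) * (z1 - z2) = 0)
    (hB3b : x0 * (y0 - y1) * (z1 + z2) = 0)
    (hB3c : x0 * (y0 - y1) * (z1 - z2) = 0) :
    (x0 = 0 ∧ x1 = 0 ∧ x2 = 0) ∨ (y0 = 0 ∧ y1 = 0 ∧ y2 = 0) ∨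
      (z0 = 0 ∧ z1 = 0 ∧ z2 = 0) := by
  by_cases hx0 : x0 = 0
  · by_cases hx1 : x1 = 0
    · exact Or.inl ⟨hx0, hx1, by linear_combination hs - hx0 - hx1⟩
    · -- Case II : x0 = 0, x1 ≠ 0, x2 = -x1
      have hx2 : x2 = -x1 := by linear_combination hs - hx0
      have hb1 : x1 - x2 ≠ 0 := fun hh => hx1 (by linear_combination hh / 2 + hx2 / 2)
      have ha0 : x0 + x1 ≠ 0 := fun hh => hx1 (by linear_combination hh - hx0)
      have ha1 : x0 - x1 ≠ 0 := fun hh => hx1 (by linear_combination hx0 - hh)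
      have hx2' : x2 ≠ 0 := fun hh => hx1 (by linear_combination hx2 - hh)
      by_cases hz2 : z2 = 0
      · by_cases hz0 : z0 = 0
        · by_cases hz1 : z1 = 0
          · exact Or.inr (Or.inr ⟨hz0, hz1, hz2⟩)
          · have hp0 : z0 + z1 ≠ 0 := fun hh => hz1 (by linear_combination hh - hz0)
            have hp1 : z0 - z1 ≠ 0 := fun hh => hz1 (by linear_combination hz0 - hh)
            have hy0 : y0 = 0 := z3m hb1 hp0 hA1a
            have h1 : y1 - y2 = 0 := z3m hx2' hp0 hA3a
            have h2 : y1 + y2 = 0 := z3m hx2' hp1 hA3b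
            exact Or.inr (Or.inl ⟨hy0, by linear_combination (h1 + h2) / 2,
              by linear_combination (h2 - h1) / 2⟩)
        · have h1 : y1 - y2 = 0 := z3m ha0 hz0 hB2a
          have h2 : y1 + y2 = 0 := z3m ha1 hz0 hB2b
          by_cases hy0 : y0 = 0
          · exact Or.inr (Or.inl ⟨hy0, by linear_combination (h1 + h2) / 2,
              by linear_combination (h2 - h1) / 2⟩)
          · have h3 : z0 + z1 = 0 := z3r hb1 hy0 hA1a
            have h4 : z0 - z1 = 0 := z3r hb1 hy0 hA1c
            exact absurd (show z0 = 0 by linear_combination (h3 + h4) / 2) hz0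
      · have h1 : y0 + y1 = 0 := z3m hb1 hz2 hA2a
        have h2 : y0 - y1 = 0 := z3m hb1 hz2 hA2c
        by_cases hy2 : y2 = 0
        · exact Or.inr (Or.inl ⟨by linear_combination (h1 + h2) / 2,
            by linear_combination (h1 - h2) / 2, hy2⟩)
        · have h3 : z1 - z2 = 0 := z3r ha0 hy2 hB1a
          have h4 : z1 + z2 = 0 := z3r ha1 hy2 hB1b
          exact absurd (show z2 = 0 by linear_combination (h4 - h3) / 2) hz2
  · by_cases hx2 : x2 = 0
    · -- Case III : x0 ≠ 0, x2 = 0, x1 = -x0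
      have hx1 : x1 = -x0 := by linear_combination hs - hx2
      have hb1 : x1 - x2 ≠ 0 := fun hh => hx0 (by linear_combination hx1 - hh - hx2)
      have hb0 : x1 + x2 ≠ 0 := fun hh => hx0 (by linear_combination hx1 - hh + hx2)
      have ha1 : x0 - x1 ≠ 0 := fun hh => hx0 (by linear_combination (hh + hx1) / 2)
      by_cases hy0 : y0 = 0
      · by_cases hy2 : y2 = 0
        · by_cases hy1 : y1 = 0
          · exact Or.inr (Or.inl ⟨hy0, hy1, hy2⟩)
          · have hc0 : y0 + y1 ≠ 0 := fun hh => hy1 (by linear_combination hh - hy0)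
            have hd0 : y1 + y2 ≠ 0 := fun hh => hy1 (by linear_combination hh - hy2)
            have hz2' : z2 = 0 := z3r hb1 hc0 hA2a
            have hz0' : z0 = 0 := z3r ha1 hd0 hB2b
            have h3 : z1 - z2 = 0 := z3r hx0 hc0 hB3a
            exact Or.inr (Or.inr ⟨hz0', by linear_combination h3 + hz2', hz2'⟩)
        · have h3 : z1 + z2 = 0 := z3r ha1 hy2 hB1b
          have h4 : z1 - z2 = 0 := z3r ha1 hy2 hB1c
          by_cases hz0 : z0 = 0
          · exact Or.inr (Or.inr ⟨hz0, by linear_combination (h3 + h4) / 2,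
              by linear_combination (h3 - h4) / 2⟩)
          · have h5 : y1 + y2 = 0 := z3m ha1 hz0 hB2b
            have h6 : y1 - y2 = 0 := z3m ha1 hz0 hB2c
            exact absurd (show y2 = 0 by linear_combination (h5 - h6) / 2) hy2
      · have h3 : z0 + z1 = 0 := z3r hb1 hy0 hA1a
        have h4 : z0 - z1 = 0 := z3r hb0 hy0 hA1b
        by_cases hz2 : z2 = 0
        · exact Or.inr (Or.inr ⟨by linear_combination (h3 + h4) / 2,
            by linear_combination (h3 - h4) / 2, hz2⟩)
        · have h5 : y0 + y1 = 0 := z3m hb1 hz2 hA2a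
          have h6 : y0 - y1 = 0 := z3m hb1 hz2 hA2c
          exact absurd (show y0 = 0 by linear_combination (h5 + h6) / 2) hy0
    · -- Case I : x0 ≠ 0, x2 ≠ 0
      have ha0 : x0 + x1 ≠ 0 := fun hh => hx2 (by linear_combination hs - hh)
      have hb0 : x1 + x2 ≠ 0 := fun hh => hx0 (by linear_combination hs - hh)
      by_cases hy12 : y1 - y2 = 0
      · by_cases hy01 : y0 - y1 = 0
        · by_cases hy0 : y0 = 0
          · exact Or.inr (Or.inl ⟨hy0, by linear_combination hy0 - hy01,
              by linear_combination hy0 - hy01 - hy12⟩)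
          · have hc0 : y0 + y1 ≠ 0 := fun hh => hy0 (by linear_combination (hh + hy01) / 2)
            have hd0 : y1 + y2 ≠ 0 := fun hh =>
              hy0 (by linear_combination (hh + hy12) / 2 + hy01)
            have h3 : z1 - z2 = 0 := z3r hx0 hc0 hB3a
            have h4 : z0 - z1 = 0 := z3r hx2 hd0 hA3b
            by_cases hz0 : z0 = 0
            · exact Or.inr (Or.inr ⟨hz0, by linear_combination hz0 - h4,
                by linear_combination hz0 - h4 - h3⟩)
            · have hp0 : z0 + z1 ≠ 0 := fun hh => hz0 (by linear_combination (hh + h4) / 2)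
              have hq0 : z1 + z2 ≠ 0 := fun hh =>
                hz0 (by linear_combination (hh + h3) / 2 + h4)
              have h5 : x1 - x2 = 0 := z3l hy0 hp0 hA1a
              have hy2' : y2 ≠ 0 := fun hh => hy0 (by linear_combination hh + hy12 + hy01)
              have h6 : x0 - x1 = 0 := z3l hy2' hq0 hB1b
              exact absurd (show x0 = 0 by linear_combination (hs + 2 * h6 + h5) / 3) hx0
        · have h3 : z1 + z2 = 0 := z3r hx0 hy01 hB3b
          have h4 : z1 - z2 = 0 := z3r hx0 hy01 hB3c
          by_cases hz0 : z0 = 0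
          · exact Or.inr (Or.inr ⟨hz0, by linear_combination (h3 + h4) / 2,
              by linear_combination (h3 - h4) / 2⟩)
          · have hp1 : z0 - z1 ≠ 0 := fun hh => hz0 (by linear_combination hh + (h3 + h4) / 2)
            have hy0' : y0 = 0 := z3m hb0 hp1 hA1b
            have h5 : y1 + y2 = 0 := z3m hx2 hp1 hA3b
            exact Or.inr (Or.inl ⟨hy0', by linear_combination (h5 + hy12) / 2,
              by linear_combination (h5 - hy12) / 2⟩)
      · have h3 : z0 + z1 = 0 := z3r hx2 hy12 hA3a
        have h4 : z0 - z1 = 0 := z3r hx2 hy12 hA3c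
        by_cases hz2 : z2 = 0
        · exact Or.inr (Or.inr ⟨by linear_combination (h3 + h4) / 2,
            by linear_combination (h3 - h4) / 2, hz2⟩)
        · have hq1 : z1 - z2 ≠ 0 := fun hh => hz2 (by linear_combination (h3 - h4) / 2 - hh)
          have hq0 : z1 + z2 ≠ 0 := fun hh => hz2 (by linear_combination hh - (h3 - h4) / 2)
          have hy2' : y2 = 0 := z3m ha0 hq1 hB1a
          have h5 : y0 + y1 = 0 := z3m hx0 hq1 hB3a
          have h6 : y0 - y1 = 0 := z3m hx0 hq0 hB3b
          exact Or.inr (Or.inl ⟨by linear_combination (h5 + h6) / 2,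
            by linear_combination (h5 - h6) / 2, hy2'⟩)

/- ### The scalar key lemma, with the stopper as a disjunction -/

lemma upb_key (x0 x1 x2 y0 y1 y2 z0 z1 z2 : ℂ)
    (hA1a : (x1 - x2) * y0 * (z0 + z1) = 0)
    (hA1b : (x1 + x2) * y0 * (z0 - z1) = 0)
    (hA1c : (x1 - x2) * y0 * (z0 - z1) = 0)
    (hA2a : (x1 - x2) * (y0 + y1) * z2 = 0)
    (hA2b : (x1 + x2) * (y0 - y1) * z2 = 0)
    (hA2c : (x1 - x2) * (y0 - y1) * z2 = 0)
    (hA3a : x2 * (y1 - y2) * (z0 + z1) = 0)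
    (hA3b : x2 * (y1 + y2) * (z0 - z1) = 0)
    (hA3c : x2 * (y1 - y2) * (z0 - z1) = 0)
    (hB1a : (x0 + x1) * y2 * (z1 - z2) = 0)
    (hB1b : (x0 - x1) * y2 * (z1 + z2) = 0)
    (hB1c : (x0 - x1) * y2 * (z1 - z2) = 0)
    (hB2a : (x0 + x1) * (y1 - y2) * z0 = 0)
    (hB2b : (x0 - x1) * (y1 + y2) * z0 = 0)
    (hB2c : (x0 - x1) * (y1 - y2) * z0 = 0)
    (hB3a : x0 * (y0 + y1) * (z1 - z2) = 0)
    (hB3b : x0 * (y0 - y1) * (z1 + z2) = 0)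
    (hB3c : x0 * (y0 - y1) * (z1 - z2) = 0)
    (hS : (x0 + x1 + x2) * (y0 + y1 + y2) * (z0 + z1 + z2) = 0) :
    (x0 = 0 ∧ x1 = 0 ∧ x2 = 0) ∨ (y0 = 0 ∧ y1 = 0 ∧ y2 = 0) ∨
      (z0 = 0 ∧ z1 = 0 ∧ z2 = 0) := by
  rcases mul_eq_zero.mp hS with h' | hz
  · rcases mul_eq_zero.mp h' with hx | hy
    · exact upb_main x0 x1 x2 y0 y1 y2 z0 z1 z2 hx hA1a hA1b hA1c hA2a hA2b hA2c hA3a hA3b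
        hA3c hB1a hB1b hB1c hB2a hB2b hB2c hB3a hB3b hB3c
    · have := upb_main y0 y1 y2 z0 z1 z2 x0 x1 x2 hy
        (by linear_combination hB2a) (by linear_combination hB2b) (by linear_combination hB2c)
        (by linear_combination hA3a) (by linear_combination hA3b) (by linear_combination hA3c)
        (by linear_combination hB1a) (by linear_combination hB1b) (by linear_combination hB1c)
        (by linear_combination hA2a) (by linear_combination hA2b) (by linear_combination hA2c)
        (by linear_combination hB3a) (by linear_combination hB3b) (by linear_combination hB3c)
        (by linear_combination hA1a) (by linear_combination hA1b) (by linear_combination hA1c)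
      tauto
  · have := upb_main z0 z1 z2 x0 x1 x2 y0 y1 y2 hz
      (by linear_combination hB3a) (by linear_combination hB3b) (by linear_combination hB3c)
      (by linear_combination hB1a) (by linear_combination hB1b) (by linear_combination hB1c)
      (by linear_combination hA2a) (by linear_combination hA2b) (by linear_combination hA2c)
      (by linear_combination hA3a) (by linear_combination hA3b) (by linear_combination hA3c)
      (by linear_combination hA1a) (by linear_combination hA1b) (by linear_combination hA1c)
      (by linear_combination hB2a) (by linear_combination hB2b) (by linear_combination hB2c)
    tauto

/-- U₃ is an unextendible product basis: any product vector orthogonal to every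
member of U₃ is zero. -/
theorem U3_unextendible (u v w : Fin 3 → ℂ)
    (h : ∀ x ∈ U3, inp3 x (tp3 u v w) = 0) :
    tp3 u v w = 0 := by
  have hA1a : (u 1 - u 2) * v 0 * (w 0 + w 1) = 0 := by
    have t := h _ (Or.inl ⟨0, 1, by decide, Or.inl rfl⟩)
    rw [inp3_tp3, dot_xi1, dot_e0, dot_eta0] at t; exact t
  have hA1b : (u 1 + u 2) * v 0 * (w 0 - w 1) = 0 := by
    have t := h _ (Or.inl ⟨1, 0, by decide, Or.inl rfl⟩)
    rw [inp3_tp3, dot_xi0, dot_e0, dot_eta1] at t; exact t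
  have hA1c : (u 1 - u 2) * v 0 * (w 0 - w 1) = 0 := by
    have t := h _ (Or.inl ⟨1, 1, by decide, Or.inl rfl⟩)
    rw [inp3_tp3, dot_xi1, dot_e0, dot_eta1] at t; exact t
  have hA2a : (u 1 - u 2) * (v 0 + v 1) * w 2 = 0 := by
    have t := h _ (Or.inl ⟨0, 1, by decide, Or.inr (Or.inl rfl)⟩)
    rw [inp3_tp3, dot_xi1, dot_eta0, dot_e2] at t; exact t
  have hA2b : (u 1 + u 2) * (v 0 - v 1) * w 2 = 0 := by
    have t := h _ (Or.inl ⟨1, 0, by decide, Or.inr (Or.inl rfl)⟩)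
    rw [inp3_tp3, dot_xi0, dot_eta1, dot_e2] at t; exact t
  have hA2c : (u 1 - u 2) * (v 0 - v 1) * w 2 = 0 := by
    have t := h _ (Or.inl ⟨1, 1, by decide, Or.inr (Or.inl rfl)⟩)
    rw [inp3_tp3, dot_xi1, dot_eta1, dot_e2] at t; exact t
  have hA3a : u 2 * (v 1 - v 2) * (w 0 + w 1) = 0 := by
    have t := h _ (Or.inl ⟨0, 1, by decide, Or.inr (Or.inr (Or.inl rfl))⟩)
    rw [inp3_tp3, dot_e2, dot_xi1, dot_eta0] at t; exact t
  have hA3b : u 2 * (v 1 + v 2) * (w 0 - w 1) = 0 := by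
    have t := h _ (Or.inl ⟨1, 0, by decide, Or.inr (Or.inr (Or.inl rfl))⟩)
    rw [inp3_tp3, dot_e2, dot_xi0, dot_eta1] at t; exact t
  have hA3c : u 2 * (v 1 - v 2) * (w 0 - w 1) = 0 := by
    have t := h _ (Or.inl ⟨1, 1, by decide, Or.inr (Or.inr (Or.inl rfl))⟩)
    rw [inp3_tp3, dot_e2, dot_xi1, dot_eta1] at t; exact t
  have hB1a : (u 0 + u 1) * v 2 * (w 1 - w 2) = 0 := by
    have t := h _ (Or.inl ⟨0, 1, by decide, Or.inr (Or.inr (Or.inr (Or.inl rfl)))⟩)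
    rw [inp3_tp3, dot_eta0, dot_e2, dot_xi1] at t; exact t
  have hB1b : (u 0 - u 1) * v 2 * (w 1 + w 2) = 0 := by
    have t := h _ (Or.inl ⟨1, 0, by decide, Or.inr (Or.inr (Or.inr (Or.inl rfl)))⟩)
    rw [inp3_tp3, dot_eta1, dot_e2, dot_xi0] at t; exact t
  have hB1c : (u 0 - u 1) * v 2 * (w 1 - w 2) = 0 := by
    have t := h _ (Or.inl ⟨1, 1, by decide, Or.inr (Or.inr (Or.inr (Or.inl rfl)))⟩)
    rw [inp3_tp3, dot_eta1, dot_e2, dot_xi1] at t; exact t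
  have hB2a : (u 0 + u 1) * (v 1 - v 2) * w 0 = 0 := by
    have t := h _ (Or.inl ⟨0, 1, by decide, Or.inr (Or.inr (Or.inr (Or.inr (Or.inl rfl))))⟩)
    rw [inp3_tp3, dot_eta0, dot_xi1, dot_e0] at t; exact t
  have hB2b : (u 0 - u 1) * (v 1 + v 2) * w 0 = 0 := by
    have t := h _ (Or.inl ⟨1, 0, by decide, Or.inr (Or.inr (Or.inr (Or.inr (Or.inl rfl))))⟩)
    rw [inp3_tp3, dot_eta1, dot_xi0, dot_e0] at t; exact t
  have hB2c : (u 0 - u 1) * (v 1 - v 2) * w 0 = 0 := by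
    have t := h _ (Or.inl ⟨1, 1, by decide, Or.inr (Or.inr (Or.inr (Or.inr (Or.inl rfl))))⟩)
    rw [inp3_tp3, dot_eta1, dot_xi1, dot_e0] at t; exact t
  have hB3a : u 0 * (v 0 + v 1) * (w 1 - w 2) = 0 := by
    have t := h _ (Or.inl ⟨0, 1, by decide,
      Or.inr (Or.inr (Or.inr (Or.inr (Or.inr rfl))))⟩)
    rw [inp3_tp3, dot_e0, dot_eta0, dot_xi1] at t; exact t
  have hB3b : u 0 * (v 0 - v 1) * (w 1 + w 2) = 0 := by
    have t := h _ (Or.inl ⟨1, 0, by decide,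
      Or.inr (Or.inr (Or.inr (Or.inr (Or.inr rfl))))⟩)
    rw [inp3_tp3, dot_e0, dot_eta1, dot_xi0] at t; exact t
  have hB3c : u 0 * (v 0 - v 1) * (w 1 - w 2) = 0 := by
    have t := h _ (Or.inl ⟨1, 1, by decide,
      Or.inr (Or.inr (Or.inr (Or.inr (Or.inr rfl))))⟩)
    rw [inp3_tp3, dot_e0, dot_eta1, dot_xi1] at t; exact t
  have hS : (u 0 + u 1 + u 2) * (v 0 + v 1 + v 2) * (w 0 + w 1 + w 2) = 0 := by
    have t := h stop3 (Or.inr rfl)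
    rw [stop3, inp3_tp3, dot_s, dot_s, dot_s] at t; exact t
  have key := upb_key (u 0) (u 1) (u 2) (v 0) (v 1) (v 2) (w 0) (w 1) (w 2)
    hA1a hA1b hA1c hA2a hA2b hA2c hA3a hA3b hA3c hB1a hB1b hB1c hB2a hB2b hB2c
    hB3a hB3b hB3c hS
  rcases key with ⟨h0, h1, h2⟩ | ⟨h0, h1, h2⟩ | ⟨h0, h1, h2⟩
  · funext p
    rcases p with ⟨a, b, c⟩
    have ha : u a = 0 := by fin_cases a <;> assumption
    simp [tp3, ha]
  · funext p
    rcases p with ⟨a, b, c⟩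
    have hb : v b = 0 := by fin_cases b <;> assumption
    simp [tp3, hb]
  · funext p
    rcases p with ⟨a, b, c⟩
    have hc : w c = 0 := by fin_cases c <;> assumption
    simp [tp3, hc]
end
end
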